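/- Let q ∈ [1,∞], let J ⊆ {1,…,p} be nonempty, and let M₁, M₂ ∈ ℝ^{m×p}. Then |CIF_q(J, M₁) − CIF_q(J, M₂)| ≤ 2 |J| ‖M₁ − M₂‖_max, where ‖A‖_max denotes the maximum absolute value of the entries of the matrix A. -/

import Mathlib

open scoped ENNReal

/-- The ℓq norm of a vector `u ∈ ℝ^p`, for `q ∈ [1, ∞]` (via the `PiLp` norm). -/
noncomputable def lqNorm (q : ℝ≥0∞) [Fact (1 ≤ q)] {p : ℕ} (u : Fin p → ℝ) : ℝ :=
  ‖(WithLp.equiv q (Fin p → ℝ)).symm u‖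

/-- The cone invertibility factor
`CIF_q(J, M) := inf { |J|^{1/q} ‖Mu‖_∞ / ‖u‖_q : u ≠ 0, ‖u_{Jᶜ}‖₁ ≤ ‖u_J‖₁ }`,
with the convention `|J|^{1/∞} = 1`. -/
noncomputable def CIF (q : ℝ≥0∞) [Fact (1 ≤ q)] {m p : ℕ} (J : Finset (Fin p))
    (M : Matrix (Fin m) (Fin p) ℝ) : ℝ :=
  sInf {r : ℝ | ∃ u : Fin p → ℝ, u ≠ 0 ∧ (∑ j ∈ Jᶜ, |u j|) ≤ (∑ j ∈ J, |u j|) ∧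
    r = (J.card : ℝ) ^ (q⁻¹.toReal) * ‖M.mulVec u‖ / lqNorm q u}

/-- The maximum absolute value of the entries of a matrix. -/
noncomputable def matMaxNorm {m p : ℕ} (M : Matrix (Fin m) (Fin p) ℝ) : ℝ :=
  ⨆ i, ⨆ j, |M i j|

/- `|J|^{1/q} ‖(M₁ - M₂) u‖_∞ ≤ |J|^{1/q} ‖M₁ - M₂‖_max ‖u‖₁`, and on the cone
`‖u‖₁ ≤ 2 ‖u_J‖₁ ≤ 2 |J|^{1 - 1/q} ‖u‖_q` by Hölder. So the ratios defining `CIF_q(J, M₁)` and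
`CIF_q(J, M₂)` differ by at most `2 |J| ‖M₁ - M₂‖_max` at every `u` of the cone, and so do their
infima. -/

theorem Real.sInf_image_le_sInf_image_add {α : Type*} {s : Set α} {f g : α → ℝ} {c : ℝ}
    (hc : 0 ≤ c) (hf : BddBelow (f '' s)) (hfg : ∀ x ∈ s, f x ≤ g x + c) :
    sInf (f '' s) ≤ sInf (g '' s) + c := by
  rcases s.eq_empty_or_nonempty with rfl | hs
  · simpa using hc -- both sides are `sInf ∅ = 0`
  rw [← sub_le_iff_le_add]
  refine le_csInf (hs.image g) ?_
  rintro _ ⟨x, hx, rfl⟩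
  rw [sub_le_iff_le_add]
  exact (csInf_le hf (Set.mem_image_of_mem f hx)).trans (hfg x hx)

section lqNorm

variable (q : ℝ≥0∞) [Fact (1 ≤ q)] {p : ℕ}

theorem lqNorm_nonneg (u : Fin p → ℝ) : 0 ≤ lqNorm q u :=
  norm_nonneg _

theorem abs_apply_le_lqNorm (u : Fin p → ℝ) (j : Fin p) : |u j| ≤ lqNorm q u :=
  PiLp.norm_apply_le ((WithLp.equiv q (Fin p → ℝ)).symm u) j

theorem lqNorm_eq_sum (hq : q ≠ ∞) (u : Fin p → ℝ) :
    lqNorm q u = (∑ j, |u j| ^ q.toReal) ^ q.toReal⁻¹ := by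
  have hq0 : 0 < q.toReal :=
    ENNReal.toReal_pos (zero_lt_one.trans_le Fact.out).ne' hq
  rw [lqNorm, PiLp.norm_eq_sum hq0, one_div]
  rfl

theorem sum_abs_le_card_rpow_mul_lqNorm (J : Finset (Fin p)) (u : Fin p → ℝ) :
    ∑ j ∈ J, |u j| ≤ (J.card : ℝ) ^ (1 - q⁻¹.toReal) * lqNorm q u := by
  rcases eq_or_ne q ∞ with rfl | hq
  · simpa using J.sum_le_card_nsmul _ _ fun j _ => abs_apply_le_lqNorm ∞ u j
  have hq1 : 1 ≤ q.toReal := by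
    simpa using ENNReal.toReal_mono hq (Fact.out : 1 ≤ q)
  have holder := Real.inner_le_weight_mul_Lp_of_nonneg J hq1 (fun _ => 1) (fun j => |u j|)
    (fun _ => zero_le_one) (fun j => abs_nonneg (u j))
  simp only [one_mul, Finset.sum_const, nsmul_eq_mul, mul_one] at holder
  rw [ENNReal.toReal_inv, lqNorm_eq_sum q hq]
  refine holder.trans (mul_le_mul_of_nonneg_left ?_ (by positivity))
  refine Real.rpow_le_rpow (by positivity) ?_ (by positivity)
  exact Finset.sum_le_sum_of_subset_of_nonneg J.subset_univ fun j _ _ => by positivity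

end lqNorm

section matMaxNorm

variable {m p : ℕ}

theorem matMaxNorm_nonneg (M : Matrix (Fin m) (Fin p) ℝ) : 0 ≤ matMaxNorm M :=
  Real.iSup_nonneg fun _ => Real.iSup_nonneg fun _ => abs_nonneg _

theorem abs_apply_le_matMaxNorm (M : Matrix (Fin m) (Fin p) ℝ) (i : Fin m) (j : Fin p) :
    |M i j| ≤ matMaxNorm M :=
  (le_ciSup (Set.finite_range fun j => |M i j|).bddAbove j).trans
    (le_ciSup (Set.finite_range fun i => ⨆ j, |M i j|).bddAbove i)

theorem matMaxNorm_sub_comm (M₁ M₂ : Matrix (Fin m) (Fin p) ℝ) :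
    matMaxNorm (M₁ - M₂) = matMaxNorm (M₂ - M₁) := by
  simp only [matMaxNorm, Matrix.sub_apply, abs_sub_comm (M₁ _ _)]

theorem norm_mulVec_le_matMaxNorm_mul (M : Matrix (Fin m) (Fin p) ℝ) (u : Fin p → ℝ) :
    ‖M.mulVec u‖ ≤ matMaxNorm M * ∑ j, |u j| := by
  refine (pi_norm_le_iff_of_nonneg
    (mul_nonneg (matMaxNorm_nonneg M) (by positivity))).2 fun i => ?_
  calc ‖(M.mulVec u) i‖ = |∑ j, M i j * u j| := rfl
    _ ≤ ∑ j, |M i j| * |u j| := by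
      simpa only [abs_mul] using Finset.abs_sum_le_sum_abs (fun j => M i j * u j) Finset.univ
    _ ≤ ∑ j, matMaxNorm M * |u j| := by
      gcongr with j
      exact abs_apply_le_matMaxNorm M i j
    _ = matMaxNorm M * ∑ j, |u j| := Finset.mul_sum _ _ _ |>.symm

end matMaxNorm

section CIF

variable (q : ℝ≥0∞) [Fact (1 ≤ q)] {m p : ℕ} (J : Finset (Fin p))

def cifCone : Set (Fin p → ℝ) :=
  {u | u ≠ 0 ∧ ∑ j ∈ Jᶜ, |u j| ≤ ∑ j ∈ J, |u j|}

noncomputable def cifRatio (M : Matrix (Fin m) (Fin p) ℝ) (u : Fin p → ℝ) : ℝ :=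
  (J.card : ℝ) ^ q⁻¹.toReal * ‖M.mulVec u‖ / lqNorm q u

theorem CIF_eq_sInf_image (M : Matrix (Fin m) (Fin p) ℝ) :
    CIF q J M = sInf (cifRatio q J M '' cifCone J) := by
  simp only [CIF, cifRatio, cifCone, Set.image, Set.mem_ofPred_eq, and_assoc, eq_comm]

theorem cifRatio_nonneg (M : Matrix (Fin m) (Fin p) ℝ) (u : Fin p → ℝ) :
    0 ≤ cifRatio q J M u := by
  have := lqNorm_nonneg q u
  unfold cifRatio
  positivity

theorem card_rpow_mul_sum_abs_le_of_mem_cifCone {u : Fin p → ℝ} (hu : u ∈ cifCone J) :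
    (J.card : ℝ) ^ q⁻¹.toReal * ∑ j, |u j| ≤ 2 * J.card * lqNorm q u := by
  have hsum : ∑ j, |u j| ≤ 2 * ∑ j ∈ J, |u j| := by
    rw [← J.sum_add_sum_compl, two_mul]
    exact (add_le_add_iff_left _).2 hu.2
  have hcard : (J.card : ℝ) ^ q⁻¹.toReal * (J.card : ℝ) ^ (1 - q⁻¹.toReal) = J.card := by
    rw [← Real.rpow_add' (Nat.cast_nonneg _) (by simp), add_sub_cancel, Real.rpow_one]
  calc (J.card : ℝ) ^ q⁻¹.toReal * ∑ j, |u j|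
      ≤ (J.card : ℝ) ^ q⁻¹.toReal * (2 * ((J.card : ℝ) ^ (1 - q⁻¹.toReal) * lqNorm q u)) := by
        gcongr
        exact hsum.trans (by gcongr; exact sum_abs_le_card_rpow_mul_lqNorm q J u)
    _ = 2 * J.card * lqNorm q u := by linear_combination 2 * lqNorm q u * hcard

theorem cifRatio_le_add (M₁ M₂ : Matrix (Fin m) (Fin p) ℝ) {u : Fin p → ℝ}
    (hu : u ∈ cifCone J) :
    cifRatio q J M₁ u ≤ cifRatio q J M₂ u + 2 * J.card * matMaxNorm (M₁ - M₂) := by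
  set c : ℝ := (J.card : ℝ) ^ q⁻¹.toReal
  have htri : ‖M₁.mulVec u‖ ≤ ‖M₂.mulVec u‖ + ‖(M₁ - M₂).mulVec u‖ := by
    rw [Matrix.sub_mulVec]
    exact norm_le_norm_add_norm_sub' _ _
  have hdiff : c * ‖(M₁ - M₂).mulVec u‖ ≤ 2 * J.card * matMaxNorm (M₁ - M₂) * lqNorm q u :=
    calc c * ‖(M₁ - M₂).mulVec u‖ ≤ c * (matMaxNorm (M₁ - M₂) * ∑ j, |u j|) := by
          gcongr
          exact norm_mulVec_le_matMaxNorm_mul _ u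
      _ = matMaxNorm (M₁ - M₂) * (c * ∑ j, |u j|) := by ring
      _ ≤ matMaxNorm (M₁ - M₂) * (2 * J.card * lqNorm q u) :=
          mul_le_mul_of_nonneg_left (card_rpow_mul_sum_abs_le_of_mem_cifCone q J hu)
            (matMaxNorm_nonneg _)
      _ = 2 * J.card * matMaxNorm (M₁ - M₂) * lqNorm q u := by ring
  have hN := lqNorm_nonneg q u
  calc cifRatio q J M₁ u ≤ (c * ‖M₂.mulVec u‖ + c * ‖(M₁ - M₂).mulVec u‖) / lqNorm q u := by
        rw [← mul_add]
        unfold cifRatio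
        gcongr
    _ ≤ cifRatio q J M₂ u + 2 * J.card * matMaxNorm (M₁ - M₂) := by
        rw [add_div]
        exact add_le_add le_rfl (div_le_of_le_mul₀ hN (mul_nonneg (by positivity)
          (matMaxNorm_nonneg _)) hdiff)

theorem CIF_le_add (M₁ M₂ : Matrix (Fin m) (Fin p) ℝ) :
    CIF q J M₁ ≤ CIF q J M₂ + 2 * J.card * matMaxNorm (M₁ - M₂) := by
  simp only [CIF_eq_sInf_image]
  refine Real.sInf_image_le_sInf_image_add
    (mul_nonneg (by positivity) (matMaxNorm_nonneg _)) ?_ fun u hu => cifRatio_le_add q J M₁ M₂ hu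
  exact ⟨0, by rintro _ ⟨u, -, rfl⟩; exact cifRatio_nonneg q J M₁ u⟩

end CIF

theorem CIF_lipschitz_matMaxNorm_general
    (q : ℝ≥0∞) [Fact (1 ≤ q)] (m p : ℕ) (J : Finset (Fin p))
    (M₁ M₂ : Matrix (Fin m) (Fin p) ℝ) :
    |CIF q J M₁ - CIF q J M₂| ≤ 2 * (J.card : ℝ) * matMaxNorm (M₁ - M₂) := by
  refine abs_sub_le_iff.2 ⟨sub_le_iff_le_add'.2 (CIF_le_add q J M₁ M₂), sub_le_iff_le_add'.2 ?_⟩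
  rw [matMaxNorm_sub_comm]
  exact CIF_le_add q J M₂ M₁

/-- The cone invertibility factor is Lipschitz in the matrix with respect to
the entrywise max norm: `|CIF_q(J, M₁) − CIF_q(J, M₂)| ≤ 2 |J| ‖M₁ − M₂‖_max`. -/
theorem CIF_lipschitz_matMaxNorm
    (q : ℝ≥0∞) [Fact (1 ≤ q)] (m p : ℕ) (J : Finset (Fin p)) (hJ : J.Nonempty)
    (M₁ M₂ : Matrix (Fin m) (Fin p) ℝ) :
    |CIF q J M₁ - CIF q J M₂| ≤ 2 * (J.card : ℝ) * matMaxNorm (M₁ - M₂) :=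
  CIF_lipschitz_matMaxNorm_general q m p J M₁ M₂
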